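/- With notation as in Section 5, the map Y ↦ d_Y from {Y : X ⊆ Y ⊆ Z, |Y| = n} to D_λ is injective, and its image is exactly {d ∈ D_λ : W_{X,d} ≠ ∅}. -/

import Mathlib

open Equiv Finset

noncomputable section

/-- Coxeter length of a permutation of `Fin r` = number of inversions. -/
def permLength {r : ℕ} (w : Equiv.Perm (Fin r)) : ℕ :=
  (Finset.univ.filter (fun p : Fin r × Fin r => p.1 < p.2 ∧ w p.2 < w p.1)).card

/-- the simple transpositions `(i, i+1)`. -/
def IsSimpleTransposition {r : ℕ} (s : Equiv.Perm (Fin r)) : Prop :=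
  ∃ (i : ℕ) (h : i + 1 < r), s = Equiv.swap ⟨i, Nat.lt_of_succ_lt h⟩ ⟨i + 1, h⟩

/-- strong Bruhat order: `u ⊴ v` iff `u` is the product of a sublist of a reduced word for `v`. -/
def BruhatLE {r : ℕ} (u v : Equiv.Perm (Fin r)) : Prop :=
  ∃ L : List (Equiv.Perm (Fin r)),
    (∀ s ∈ L, IsSimpleTransposition s) ∧ L.prod = v ∧ L.length = permLength v ∧
      ∃ L' : List (Equiv.Perm (Fin r)), L'.Sublist L ∧ L'.prod = u

def partialSum (f : ℕ → ℕ) (e : ℕ) : ℕ := ∑ j ∈ Finset.range e, f j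

/-- a composition of `r`: a (finitely supported) sequence of non-negative integers summing to `r`. -/
def IsCompositionOf (f : ℕ → ℕ) (r : ℕ) : Prop :=
  (Function.support f).Finite ∧ ∑ᶠ i, f i = r

/-- dominance order on compositions: `DomLE f g` means `f ⊴ g`. -/
def DomLE (f g : ℕ → ℕ) : Prop := ∀ e : ℕ, partialSum f e ≤ partialSum g e

/-- (0-indexed) row of the box `b` in the Young diagram of the composition `f`,
boxes being numbered `0, 1, 2, …` along the rows. -/
def rowIndex {r : ℕ} (f : ℕ → ℕ) (b : Fin r) : ℕ :=
  sInf {i : ℕ | (b : ℕ) < partialSum f (i + 1)}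

/-- the Young (standard parabolic) subgroup `W_f`, as a set of permutations. -/
def YoungSubgroup {r : ℕ} (f : ℕ → ℕ) : Set (Equiv.Perm (Fin r)) :=
  {w | ∀ b : Fin r, rowIndex f (w b) = rowIndex f b}

/-- `W_{f,g}`; positions are acted on on the right, `(b)w = w⁻¹ b`. -/
def Wlm {r : ℕ} (f g : ℕ → ℕ) : Set (Equiv.Perm (Fin r)) :=
  {w | ∀ (i : ℕ) (b : Fin r), i ≤ rowIndex f b → i ≤ rowIndex g (w⁻¹ b)}

/-- `D_f`: minimal length representatives of the cosets `W_f d`. -/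
def minimalCosetReps {r : ℕ} (f : ℕ → ℕ) : Set (Equiv.Perm (Fin r)) :=
  {d | ∀ π ∈ YoungSubgroup (r := r) f, permLength d ≤ permLength (π * d)}

/-- a tableau of shape `f` is encoded by its entry function, a permutation of the boxes;
the tableau `t^f d` corresponds to the entry function `d⁻¹`. -/
def IsRowStandard {r : ℕ} (f : ℕ → ℕ) (t : Equiv.Perm (Fin r)) : Prop :=
  ∀ b₁ b₂ : Fin r, rowIndex f b₁ = rowIndex f b₂ → b₁ < b₂ → t b₁ < t b₂

/-- generalized tableaux are functions `Fin r → ℕ`; content `g` (0-indexed entries). -/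
def HasContent {r : ℕ} (g : ℕ → ℕ) (T : Fin r → ℕ) : Prop :=
  ∀ i : ℕ, (Finset.univ.filter (fun b => T b = i)).card = g i

def IsRowSemistandard {r : ℕ} (f : ℕ → ℕ) (T : Fin r → ℕ) : Prop :=
  ∀ b₁ b₂ : Fin r, rowIndex f b₁ = rowIndex f b₂ → b₁ ≤ b₂ → T b₁ ≤ T b₂

/-- ascending: every entry in row `i` is `≥ i`. -/
def IsAscending {r : ℕ} (f : ℕ → ℕ) (T : Fin r → ℕ) : Prop :=
  ∀ b : Fin r, rowIndex f b ≤ T b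

/-- `T^λ_g`: the boxes filled in the natural order with `g 0` zeroes, `g 1` ones, … -/
def stdTableau {r : ℕ} (g : ℕ → ℕ) : Fin r → ℕ := fun b => rowIndex g b

/-- conjugate (dual) of a partition. -/
def conjFn (l : ℕ → ℕ) : ℕ → ℕ := fun i => Nat.card {k : ℕ | i + 1 ≤ l k}

/-- (row, column) coordinates of box `b` in the diagram of `f`. -/
def boxPlace {r : ℕ} (f : ℕ → ℕ) (b : Fin r) : ℕ × ℕ :=
  (rowIndex f b, (b : ℕ) - partialSum f (rowIndex f b))

/-- the set `Z` of entries of rows `k` and `k+1` of the tableau (with entry function) `t`. -/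
def rowsKK1 {r : ℕ} (l : ℕ → ℕ) (k : ℕ) (t : Equiv.Perm (Fin r)) : Finset (Fin r) :=
  (Finset.univ.filter (fun b => rowIndex l b = k ∨ rowIndex l b = k + 1)).image t

/-- the composition `μ_X` (with `c = |X|`). -/
def muComp (l : ℕ → ℕ) (k c : ℕ) : ℕ → ℕ :=
  fun j => if j = k then l k + l (k + 1) - c else if j = k + 1 then c else l j

/-- the composition `ν_X` (with `c = |X|`). -/
def nuComp (l : ℕ → ℕ) (k c : ℕ) : ℕ → ℕ :=
  fun j => if j ≤ k then l j
    else if j = k + 1 then l (k + 1) - c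
    else if j = k + 2 then c
    else l (j - 1)

/-- `dX` encodes the row-standard `mu`-tableau `t_X = t^{mu} dX` (entry function `dX⁻¹`)
which agrees with `t` outside rows `k, k+1`, has `X` in row `k+1` and `Z \ X` in row `k`. -/
def IsTabX {r : ℕ} (l mu : ℕ → ℕ) (k : ℕ) (t : Equiv.Perm (Fin r)) (X : Finset (Fin r))
    (dX : Equiv.Perm (Fin r)) : Prop :=
  IsRowStandard mu dX⁻¹ ∧
  (∀ b : Fin r, rowIndex mu b ≠ k → rowIndex mu b ≠ k + 1 → dX⁻¹ b = t b) ∧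
  (Finset.univ.filter (fun b => rowIndex mu b = k + 1)).image (fun b => dX⁻¹ b) = X ∧
  (Finset.univ.filter (fun b => rowIndex mu b = k)).image (fun b => dX⁻¹ b) = rowsKK1 l k t \ X

/-- the set `W_{X,d} = W_{μ_X} ∩ (D_{ν_X} ∩ W_λ) d d_X⁻¹`. -/
def WXset {r : ℕ} (mu nu l : ℕ → ℕ) (dX d : Equiv.Perm (Fin r)) : Set (Equiv.Perm (Fin r)) :=
  {w | w ∈ YoungSubgroup (r := r) mu ∧
    ∃ e, e ∈ minimalCosetReps (r := r) nu ∧ e ∈ YoungSubgroup (r := r) l ∧ w = e * d * dX⁻¹}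

lemma partialSum_mono (f : ℕ → ℕ) : Monotone (partialSum f) := fun i j hij =>
  Finset.sum_le_sum_of_subset (Finset.range_subset_range.2 hij)

/-- boundedness needed for rowIndex to behave -/
def Bdd (f : ℕ → ℕ) (r : ℕ) : Prop := ∀ b : Fin r, ∃ i, (b : ℕ) < partialSum f (i + 1)

lemma exists_partialSum_eq {f : ℕ → ℕ} {r : ℕ} (h : IsCompositionOf f r) :
    ∃ N, ∀ e, N ≤ e → partialSum f e = r := by
  obtain ⟨hfin, hsum⟩ := h
  obtain ⟨N, hN⟩ : ∃ N, ∀ x ∈ Function.support f, x < N := by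
    obtain ⟨N, hN⟩ := (hfin.image id).bddAbove
    exact ⟨N + 1, fun x hx => Nat.lt_succ_of_le (hN ⟨x, hx, rfl⟩)⟩
  refine ⟨N, fun e he => ?_⟩
  rw [← hsum, partialSum]
  exact (finsum_eq_finset_sum_of_support_subset f (fun x hx => Finset.mem_coe.2
    (Finset.mem_range.2 (lt_of_lt_of_le (hN x hx) he)))).symm

lemma partialSum_le_total {f : ℕ → ℕ} {r : ℕ} (h : IsCompositionOf f r) (e : ℕ) :
    partialSum f e ≤ r := by
  obtain ⟨N, hN⟩ := exists_partialSum_eq h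
  calc partialSum f e ≤ partialSum f (max e N) := partialSum_mono f (le_max_left _ _)
    _ = r := hN _ (le_max_right _ _)

lemma bdd_of_comp {f : ℕ → ℕ} {r : ℕ} (h : IsCompositionOf f r) : Bdd f r := by
  obtain ⟨N, hN⟩ := exists_partialSum_eq h
  exact fun b => ⟨N, by rw [hN _ (Nat.le_succ_of_le le_rfl)]; exact b.isLt⟩

lemma rowIndex_lt {r : ℕ} {f : ℕ → ℕ} (hb : Bdd f r) (b : Fin r) :
    (b : ℕ) < partialSum f (rowIndex f b + 1) :=
  Nat.sInf_mem (Set.nonempty_def.2 (hb b))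

lemma partialSum_rowIndex_le {r : ℕ} (f : ℕ → ℕ) (b : Fin r) :
    partialSum f (rowIndex f b) ≤ (b : ℕ) := by
  rcases Nat.eq_zero_or_pos (rowIndex f b) with h | h
  · rw [h]; simp [partialSum]
  · obtain ⟨j, hj⟩ := Nat.exists_eq_add_of_lt h
    have hjlt : j < rowIndex f b := by omega
    have : j ∉ {i : ℕ | (b : ℕ) < partialSum f (i + 1)} := Nat.notMem_of_lt_sInf hjlt
    simp only [Set.mem_setOf_eq, not_lt] at this
    calc partialSum f (rowIndex f b) = partialSum f (j + 1) := by rw [hj]; ring_nf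
      _ ≤ (b:ℕ) := this

lemma rowIndex_eq_iff {r : ℕ} {f : ℕ → ℕ} (hb : Bdd f r) (b : Fin r) (i : ℕ) :
    rowIndex f b = i ↔ partialSum f i ≤ (b : ℕ) ∧ (b : ℕ) < partialSum f (i + 1) := by
  constructor
  · rintro rfl; exact ⟨partialSum_rowIndex_le f b, rowIndex_lt hb b⟩
  · rintro ⟨h1, h2⟩
    have hle : rowIndex f b ≤ i := Nat.sInf_le h2
    have hge : i ≤ rowIndex f b := by
      by_contra hc
      push_neg at hc
      have := rowIndex_lt hb b
      have : (b:ℕ) < partialSum f i :=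
        lt_of_lt_of_le this (partialSum_mono f (by omega))
      omega
    omega

lemma rowIndex_mono {r : ℕ} {f : ℕ → ℕ} (hb : Bdd f r) {b₁ b₂ : Fin r} (h : b₁ ≤ b₂) :
    rowIndex f b₁ ≤ rowIndex f b₂ := by
  apply Nat.sInf_le
  have := rowIndex_lt hb b₂
  exact lt_of_le_of_lt (by exact_mod_cast h) this

lemma lt_of_rowIndex_lt {r : ℕ} {f : ℕ → ℕ} (hb : Bdd f r) {b₁ b₂ : Fin r}
    (h : rowIndex f b₁ < rowIndex f b₂) : b₁ < b₂ := by
  by_contra hc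
  push_neg at hc
  exact absurd (rowIndex_mono hb hc) (by omega)

-- L2 : row standard implies minimal coset rep
lemma mem_minimalCosetReps_of_rowStandard {r : ℕ} {f : ℕ → ℕ} (hb : Bdd f r)
    {d : Equiv.Perm (Fin r)} (hd : IsRowStandard f d⁻¹) : d ∈ minimalCosetReps f := by
  intro π hπ
  apply Finset.card_le_card
  intro p hp
  simp only [Finset.mem_filter, Finset.mem_univ, true_and] at hp ⊢
  obtain ⟨hxy, hinv⟩ := hp
  refine ⟨hxy, ?_⟩
  have hrow : rowIndex f (d p.2) < rowIndex f (d p.1) := by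
    rcases lt_or_eq_of_le (rowIndex_mono hb (le_of_lt hinv)) with h | h
    · exact h
    · exfalso
      have := hd (d p.2) (d p.1) h hinv
      simp only [Equiv.Perm.coe_inv, Equiv.symm_apply_apply] at this
      exact absurd hxy (by omega)
  have h1 : rowIndex f ((π * d) p.2) < rowIndex f ((π * d) p.1) := by
    simp only [Equiv.Perm.mul_apply]
    rw [hπ (d p.2), hπ (d p.1)]
    exact hrow
  exact lt_of_rowIndex_lt hb h1

lemma swap_mem_young {r : ℕ} {f : ℕ → ℕ} {a b : Fin r} (h : rowIndex f a = rowIndex f b) :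
    Equiv.swap a b ∈ YoungSubgroup (r := r) f := by
  intro x
  rcases eq_or_ne x a with rfl | hxa
  · rw [Equiv.swap_apply_left]; exact h.symm
  rcases eq_or_ne x b with rfl | hxb
  · rw [Equiv.swap_apply_right]; exact h
  · rw [Equiv.swap_apply_of_ne_of_ne hxa hxb]

lemma rowStandard_of_mem_minimalCosetReps {r : ℕ} {f : ℕ → ℕ} (hb : Bdd f r)
    {d : Equiv.Perm (Fin r)} (hd : d ∈ minimalCosetReps f) : IsRowStandard f d⁻¹ := by
  classical
  have adj : ∀ (a : Fin r) (ha : (a : ℕ) + 1 < r),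
      rowIndex f a = rowIndex f ⟨(a : ℕ) + 1, ha⟩ → d⁻¹ a < d⁻¹ ⟨(a : ℕ) + 1, ha⟩ := by
    intro a ha hrow
    by_contra hc
    set a₁ : Fin r := ⟨(a : ℕ) + 1, ha⟩ with ha₁
    have haa₁ : a < a₁ := by simp [Fin.lt_def, ha₁]
    have hlt : d⁻¹ a₁ < d⁻¹ a := by
      rcases lt_trichotomy (d⁻¹ a₁) (d⁻¹ a) with h | h | h
      · exact h
      · exact absurd (d⁻¹.injective h) (by simp [Fin.ext_iff, ha₁])
      · exact absurd h hc
    set x0 := d⁻¹ a₁ with hx0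
    set y0 := d⁻¹ a with hy0
    have hdx0 : d x0 = a₁ := Equiv.apply_symm_apply d a₁
    have hdy0 : d y0 = a := Equiv.apply_symm_apply d a
    set π := Equiv.swap a a₁ with hπdef
    have hπ : π ∈ YoungSubgroup (r := r) f := swap_mem_young hrow
    have key : ∀ u v : Fin r,
        (π v < π u ↔ ((v < u ∨ (u = a ∧ v = a₁)) ∧ ¬(u = a₁ ∧ v = a))) := by
      intro u v
      have hval : (a₁ : ℕ) = (a : ℕ) + 1 := rfl
      simp only [hπdef, Equiv.swap_apply_def]
      split_ifs <;>
        (simp only [Fin.lt_def, Fin.ext_iff] at *) <;> omega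
    have hset : (Finset.univ.filter
          (fun p : Fin r × Fin r => p.1 < p.2 ∧ (π * d) p.2 < (π * d) p.1))
        = (Finset.univ.filter
          (fun p : Fin r × Fin r => p.1 < p.2 ∧ d p.2 < d p.1)).erase (x0, y0) := by
      ext ⟨x, y⟩
      rw [Finset.mem_filter]
      simp only [Finset.mem_filter, Finset.mem_univ, true_and, Finset.mem_erase,
        Equiv.Perm.mul_apply]
      constructor
      · rintro ⟨hxy, hlt'⟩
        rw [key] at hlt'
        obtain ⟨h1, h2⟩ := hlt'
        have hdyx : d y < d x := by
          rcases h1 with h | ⟨hdx, hdy⟩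
          · exact h
          · exfalso
            have hx' : x = y0 := d.injective (by rw [hdx, hdy0])
            have hy' : y = x0 := d.injective (by rw [hdy, hdx0])
            rw [hx', hy'] at hxy
            exact absurd (lt_trans hlt hxy) (lt_irrefl _)
        refine ⟨?_, hxy, hdyx⟩
        intro hpair
        have hx' : x = x0 := congrArg Prod.fst hpair
        have hy' : y = y0 := congrArg Prod.snd hpair
        exact h2 ⟨by rw [hx', hdx0], by rw [hy', hdy0]⟩
      · rintro ⟨hne, hxy, hdyx⟩
        refine ⟨hxy, ?_⟩
        rw [key]
        refine ⟨Or.inl hdyx, ?_⟩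
        rintro ⟨h1, h2⟩
        exact hne (Prod.ext (d.injective (by rw [h1, hdx0])) (d.injective (by rw [h2, hdy0])))
    have hmem : (x0, y0) ∈ (Finset.univ.filter
        (fun p : Fin r × Fin r => p.1 < p.2 ∧ d p.2 < d p.1)) := by
      simp only [Finset.mem_filter, Finset.mem_univ, true_and]
      exact ⟨hlt, by rw [hdx0, hdy0]; exact haa₁⟩
    have hcard : permLength (π * d) = permLength d - 1 := by
      rw [permLength, permLength, hset, Finset.card_erase_of_mem hmem]
    have hpos : 0 < permLength d := Finset.card_pos.2 ⟨_, hmem⟩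
    have := hd π hπ
    omega
  -- now bootstrap to arbitrary pairs in a row
  have main : ∀ n : ℕ, ∀ b₁ b₂ : Fin r, (b₂ : ℕ) = (b₁ : ℕ) + n + 1 →
      rowIndex f b₁ = rowIndex f b₂ → d⁻¹ b₁ < d⁻¹ b₂ := by
    intro n
    induction n with
    | zero =>
      intro b₁ b₂ hv hrow
      have hr1 : (b₁ : ℕ) + 1 < r := by have := b₂.isLt; omega
      have hb2 : (⟨(b₁ : ℕ) + 1, hr1⟩ : Fin r) = b₂ := by
        apply Fin.ext; show (b₁ : ℕ) + 1 = (b₂ : ℕ); omega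
      rw [← hb2] at hrow ⊢
      exact adj b₁ hr1 hrow
    | succ n ih =>
      intro b₁ b₂ hv hrow
      have hr1 : (b₁ : ℕ) + n + 1 < r := by have := b₂.isLt; omega
      set b' : Fin r := ⟨(b₁ : ℕ) + n + 1, hr1⟩ with hb'
      have hval : (b' : ℕ) = (b₁ : ℕ) + n + 1 := rfl
      have hle1 : rowIndex f b₁ ≤ rowIndex f b' :=
        rowIndex_mono hb (by rw [Fin.le_def, hval]; omega)
      have hle2 : rowIndex f b' ≤ rowIndex f b₂ :=
        rowIndex_mono hb (by rw [Fin.le_def, hval]; omega)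
      have h1 : rowIndex f b₁ = rowIndex f b' := by omega
      have h2 : rowIndex f b' = rowIndex f b₂ := by omega
      refine lt_trans (ih b₁ b' rfl h1) ?_
      have hr2 : (b' : ℕ) + 1 < r := by have := b₂.isLt; rw [hval]; omega
      have hb2 : (⟨(b' : ℕ) + 1, hr2⟩ : Fin r) = b₂ := by
        apply Fin.ext; show (b' : ℕ) + 1 = (b₂ : ℕ); rw [hval]; omega
      rw [← hb2] at h2 ⊢
      exact adj b' hr2 h2
  intro b₁ b₂ hrow hlt
  have : (b₂ : ℕ) = (b₁ : ℕ) + ((b₂ : ℕ) - (b₁ : ℕ) - 1) + 1 := by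
    have : (b₁ : ℕ) < (b₂ : ℕ) := hlt
    omega
  exact main _ b₁ b₂ this hrow

lemma eqOn_of_strictMonoOn_image_eq {α β : Type*} [LinearOrder α] [LinearOrder β]
    [DecidableEq α] [DecidableEq β] (f g : α → β) :
    ∀ (n : ℕ) (s : Finset α), s.card = n →
    (∀ a ∈ s, ∀ b ∈ s, a < b → f a < f b) →
    (∀ a ∈ s, ∀ b ∈ s, a < b → g a < g b) →
    s.image f = s.image g → ∀ a ∈ s, f a = g a := by
  intro n
  induction n with
  | zero =>
    intro s hcard _ _ _ a ha
    rw [Finset.card_eq_zero] at hcard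
    subst hcard
    exact absurd ha (Finset.notMem_empty a)
  | succ n ih =>
    intro s hcard hf hg him a ha
    have hne2 : s.Nonempty := ⟨a, ha⟩
    set m := s.max' hne2 with hm
    have hmmem : m ∈ s := s.max'_mem hne2
    have hfm : ∀ (u : α → β), (∀ a ∈ s, ∀ b ∈ s, a < b → u a < u b) →
        u m = (s.image u).max' (hne2.image u) := by
      intro u hu
      apply le_antisymm
      · exact Finset.le_max' _ _ (Finset.mem_image_of_mem u hmmem)
      · apply Finset.max'_le
        intro y hy
        obtain ⟨b, hb, rfl⟩ := Finset.mem_image.1 hy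
        rcases eq_or_lt_of_le (s.le_max' b hb) with h | h
        · rw [h]
        · exact le_of_lt (hu b hb m hmmem h)
    have hfgm : f m = g m := by
      rw [hfm f hf, hfm g hg]
      simp only [him]
    rcases eq_or_ne a m with rfl | ham
    · exact hfgm
    · have haerase : a ∈ s.erase m := Finset.mem_erase.2 ⟨ham, ha⟩
      have hinjf : ∀ x ∈ s, ∀ y ∈ s, f x = f y → x = y := by
        intro x hx y hy hxy
        rcases lt_trichotomy x y with h | h | h
        · exact absurd hxy (ne_of_lt (hf x hx y hy h))
        · exact h
        · exact absurd hxy.symm (ne_of_lt (hf y hy x hx h))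
      have hinjg : ∀ x ∈ s, ∀ y ∈ s, g x = g y → x = y := by
        intro x hx y hy hxy
        rcases lt_trichotomy x y with h | h | h
        · exact absurd hxy (ne_of_lt (hg x hx y hy h))
        · exact h
        · exact absurd hxy.symm (ne_of_lt (hg y hy x hx h))
      have himg : ∀ (u : α → β), (∀ x ∈ s, ∀ y ∈ s, u x = u y → x = y) →
          (s.erase m).image u = (s.image u).erase (u m) := by
        intro u hu
        ext y
        simp only [Finset.mem_image, Finset.mem_erase]
        constructor
        · rintro ⟨b, ⟨hbm, hb⟩, rfl⟩
          exact ⟨fun h => hbm (hu b hb m hmmem h), b, hb, rfl⟩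
        · rintro ⟨hym, b, hb, rfl⟩
          exact ⟨b, ⟨fun h => hym (by rw [h]), hb⟩, rfl⟩
      apply ih (s.erase m) (by rw [Finset.card_erase_of_mem hmmem, hcard]; rfl)
        (fun x hx y hy => hf x (Finset.mem_of_mem_erase hx) y (Finset.mem_of_mem_erase hy))
        (fun x hx y hy => hg x (Finset.mem_of_mem_erase hx) y (Finset.mem_of_mem_erase hy))
        ?_ a haerase
      rw [himg f hinjf, himg g hinjg, hfgm, him]

lemma card_val_interval (r A B : ℕ) (hBr : B ≤ r) :
    (Finset.univ.filter (fun b : Fin r => A ≤ (b : ℕ) ∧ (b : ℕ) < B)).card = B - A := by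
  have himg : (Finset.univ.filter (fun b : Fin r => A ≤ (b : ℕ) ∧ (b : ℕ) < B)).image Fin.val
      = Finset.Ico A B := by
    ext x
    simp only [Finset.mem_image, Finset.mem_filter, Finset.mem_univ, true_and, Finset.mem_Ico]
    constructor
    · rintro ⟨b, hb, rfl⟩; exact hb
    · rintro ⟨h1, h2⟩; exact ⟨⟨x, lt_of_lt_of_le h2 hBr⟩, ⟨h1, h2⟩, rfl⟩
  rw [← Nat.card_Ico A B, ← himg]
  exact (Finset.card_image_of_injective _ Fin.val_injective).symm

lemma mem_image_perm {r : ℕ} {p : Fin r → Prop} [DecidablePred p] {σ : Equiv.Perm (Fin r)}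
    {z : Fin r} : z ∈ (Finset.univ.filter p).image ⇑σ ↔ p (σ⁻¹ z) := by
  simp only [Finset.mem_image, Finset.mem_filter, Finset.mem_univ, true_and]
  constructor
  · rintro ⟨b, hb, rfl⟩; simpa using hb
  · intro h; exact ⟨σ⁻¹ z, h, by simp⟩

lemma countBelow_mono {r : ℕ} (T : Finset (Fin r)) {b₁ b₂ : Fin r} (h : b₁ ≤ b₂) :
    (T.filter (· < b₁)).card ≤ (T.filter (· < b₂)).card :=
  Finset.card_le_card (fun x hx => Finset.mem_filter.2
    ⟨(Finset.mem_filter.1 hx).1, lt_of_lt_of_le (Finset.mem_filter.1 hx).2 h⟩)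

lemma countBelow_lt {r : ℕ} {T : Finset (Fin r)} {b : Fin r} (h : b ∈ T) :
    (T.filter (· < b)).card < T.card :=
  Finset.card_lt_card ⟨Finset.filter_subset _ _, fun hsub =>
    absurd (Finset.mem_filter.1 (hsub h)).2 (lt_irrefl b)⟩

lemma countBelow_strictMono {r : ℕ} {T : Finset (Fin r)} {b₁ b₂ : Fin r} (h₁ : b₁ ∈ T)
    (hlt : b₁ < b₂) : (T.filter (· < b₁)).card < (T.filter (· < b₂)).card := by
  apply Finset.card_lt_card
  constructor
  · exact fun x hx => Finset.mem_filter.2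
      ⟨(Finset.mem_filter.1 hx).1, lt_trans (Finset.mem_filter.1 hx).2 hlt⟩
  · intro hsub
    have : b₁ ∈ T.filter (· < b₂) := Finset.mem_filter.2 ⟨h₁, hlt⟩
    exact absurd (Finset.mem_filter.1 (hsub this)).2 (lt_irrefl b₁)

section comps

variable (l : ℕ → ℕ) (k c : ℕ)

lemma partialSum_succ (f : ℕ → ℕ) (e : ℕ) : partialSum f (e + 1) = partialSum f e + f e :=
  Finset.sum_range_succ f e

lemma muComp_eq_k : muComp l k c k = l k + l (k + 1) - c := by
  unfold muComp; rw [if_pos rfl]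

lemma muComp_eq_k1 : muComp l k c (k + 1) = c := by
  unfold muComp; rw [if_neg (by omega), if_pos rfl]

lemma muComp_eq_other (j : ℕ) (h1 : j ≠ k) (h2 : j ≠ k + 1) : muComp l k c j = l j := by
  unfold muComp; rw [if_neg h1, if_neg h2]

lemma nuComp_eq_le (j : ℕ) (h : j ≤ k) : nuComp l k c j = l j := by
  unfold nuComp; rw [if_pos h]

lemma nuComp_eq_k1 : nuComp l k c (k + 1) = l (k + 1) - c := by
  unfold nuComp; rw [if_neg (by omega), if_pos rfl]

lemma nuComp_eq_k2 : nuComp l k c (k + 2) = c := by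
  unfold nuComp; rw [if_neg (by omega), if_neg (by omega), if_pos rfl]

lemma nuComp_eq_other (j : ℕ) (h : k + 3 ≤ j) : nuComp l k c j = l (j - 1) := by
  unfold nuComp; rw [if_neg (by omega), if_neg (by omega), if_neg (by omega)]

lemma partialSum_mu_le (e : ℕ) (he : e ≤ k) : partialSum (muComp l k c) e = partialSum l e := by
  apply Finset.sum_congr rfl
  intro j hj
  rw [Finset.mem_range] at hj
  exact muComp_eq_other l k c j (by omega) (by omega)

lemma partialSum_mu_k1 (hc : c ≤ l (k + 1)) :
    partialSum (muComp l k c) (k + 1) = partialSum l (k + 2) - c := by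
  rw [partialSum_succ, partialSum_mu_le l k c k le_rfl, partialSum_succ, partialSum_succ,
    muComp_eq_k]
  omega

lemma partialSum_mu_ge (hc : c ≤ l (k + 1)) (e : ℕ) (he : k + 2 ≤ e) :
    partialSum (muComp l k c) e = partialSum l e := by
  induction e with
  | zero => omega
  | succ n ih =>
    rcases Nat.lt_or_ge n (k + 2) with h | h
    · have hn : n = k + 1 := by omega
      subst hn
      rw [partialSum_succ, partialSum_mu_k1 l k c hc, partialSum_succ, muComp_eq_k1]
      have h1 : c ≤ partialSum l (k + 2) := by
        rw [partialSum_succ]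
        omega
      omega
    · rw [partialSum_succ, ih h, partialSum_succ, muComp_eq_other l k c n (by omega) (by omega)]

lemma partialSum_nu_le (e : ℕ) (he : e ≤ k + 1) :
    partialSum (nuComp l k c) e = partialSum l e := by
  apply Finset.sum_congr rfl
  intro j hj
  rw [Finset.mem_range] at hj
  exact nuComp_eq_le l k c j (by omega)

lemma partialSum_nu_k2 (hc : c ≤ l (k + 1)) :
    partialSum (nuComp l k c) (k + 2) = partialSum l (k + 2) - c := by
  rw [partialSum_succ, partialSum_nu_le l k c (k + 1) le_rfl, nuComp_eq_k1]
  have h3 : partialSum l (k + 2) = partialSum l (k + 1) + l (k + 1) := by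
    rw [show k + 2 = k + 1 + 1 from rfl, partialSum_succ]
  omega

lemma partialSum_nu_ge (hc : c ≤ l (k + 1)) (e : ℕ) (he : k + 3 ≤ e) :
    partialSum (nuComp l k c) e = partialSum l (e - 1) := by
  induction e with
  | zero => omega
  | succ n ih =>
    rcases Nat.lt_or_ge n (k + 3) with h | h
    · have hn : n = k + 2 := by omega
      subst hn
      rw [partialSum_succ, partialSum_nu_k2 l k c hc, nuComp_eq_k2]
      have h1 : c ≤ partialSum l (k + 2) := by
        rw [partialSum_succ]
        omega
      simp only [Nat.add_sub_cancel]
      omega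
    · rw [partialSum_succ, ih h, nuComp_eq_other l k c n (by omega)]
      have h2 : n - 1 + 1 = n := by omega
      have h3 := partialSum_succ l (n - 1)
      rw [h2] at h3
      rw [Nat.add_sub_cancel, ← h3]

lemma bdd_mu {r : ℕ} (hl : IsCompositionOf l r) (hc : c ≤ l (k + 1)) :
    Bdd (muComp l k c) r := by
  obtain ⟨N, hN⟩ := exists_partialSum_eq hl
  intro b
  refine ⟨max N (k + 2), ?_⟩
  rw [partialSum_mu_ge l k c hc _ (by omega), hN _ (by omega)]
  exact b.isLt

lemma bdd_nu {r : ℕ} (hl : IsCompositionOf l r) (hc : c ≤ l (k + 1)) :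
    Bdd (nuComp l k c) r := by
  obtain ⟨N, hN⟩ := exists_partialSum_eq hl
  intro b
  refine ⟨max N (k + 3), ?_⟩
  rw [partialSum_nu_ge l k c hc _ (by omega), hN _ (by omega)]
  exact b.isLt

end comps

section rows

variable {r : ℕ} {l : ℕ → ℕ} {k c : ℕ} (hl : IsCompositionOf l r) (hc : c ≤ l (k + 1))

include hl hc

lemma murow_k1_iff (b : Fin r) : rowIndex (muComp l k c) b = k + 1 ↔
    partialSum l (k + 2) - c ≤ (b : ℕ) ∧ (b : ℕ) < partialSum l (k + 2) := by
  rw [rowIndex_eq_iff (bdd_mu l k c hl hc) b, partialSum_mu_k1 l k c hc,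
    partialSum_mu_ge l k c hc (k + 2) le_rfl]

lemma murow_k_iff (b : Fin r) : rowIndex (muComp l k c) b = k ↔
    partialSum l k ≤ (b : ℕ) ∧ (b : ℕ) < partialSum l (k + 2) - c := by
  rw [rowIndex_eq_iff (bdd_mu l k c hl hc) b, partialSum_mu_le l k c k le_rfl,
    partialSum_mu_k1 l k c hc]

lemma nurow_k1_iff (b : Fin r) : rowIndex (nuComp l k c) b = k + 1 ↔
    partialSum l (k + 1) ≤ (b : ℕ) ∧ (b : ℕ) < partialSum l (k + 2) - c := by
  rw [rowIndex_eq_iff (bdd_nu l k c hl hc) b, partialSum_nu_le l k c (k + 1) le_rfl,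
    partialSum_nu_k2 l k c hc]

lemma nurow_k2_iff (b : Fin r) : rowIndex (nuComp l k c) b = k + 2 ↔
    partialSum l (k + 2) - c ≤ (b : ℕ) ∧ (b : ℕ) < partialSum l (k + 2) := by
  rw [rowIndex_eq_iff (bdd_nu l k c hl hc) b, partialSum_nu_k2 l k c hc]
  have : partialSum (nuComp l k c) (k + 2 + 1) = partialSum l (k + 2) := by
    rw [partialSum_nu_ge l k c hc (k + 3) le_rfl]
    norm_num
  rw [this]

omit hc in
lemma lrow_iff (b : Fin r) (j : ℕ) : rowIndex l b = j ↔
    partialSum l j ≤ (b : ℕ) ∧ (b : ℕ) < partialSum l (j + 1) :=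
  rowIndex_eq_iff (bdd_of_comp hl) b j

lemma murow_eq_lrow_of_ne (b : Fin r) (h1 : rowIndex l b ≠ k) (h2 : rowIndex l b ≠ k + 1) :
    rowIndex (muComp l k c) b = rowIndex l b := by
  set j := rowIndex l b with hj
  have hb := (rowIndex_eq_iff (bdd_of_comp hl) b j).1 rfl
  rw [rowIndex_eq_iff (bdd_mu l k c hl hc) b]
  rcases Nat.lt_or_ge j k with h | h
  · rw [partialSum_mu_le l k c j (by omega), partialSum_mu_le l k c (j + 1) (by omega)]
    exact hb
  · have hj2 : k + 2 ≤ j := by omega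
    rw [partialSum_mu_ge l k c hc j hj2, partialSum_mu_ge l k c hc (j + 1) (by omega)]
    exact hb

lemma lrow_eq_murow_of_ne (b : Fin r) (h1 : rowIndex (muComp l k c) b ≠ k)
    (h2 : rowIndex (muComp l k c) b ≠ k + 1) :
    rowIndex l b = rowIndex (muComp l k c) b := by
  set j := rowIndex (muComp l k c) b with hj
  have hb := (rowIndex_eq_iff (bdd_mu l k c hl hc) b j).1 rfl
  rw [rowIndex_eq_iff (bdd_of_comp hl) b]
  rcases Nat.lt_or_ge j k with h | h
  · rw [partialSum_mu_le l k c j (by omega), partialSum_mu_le l k c (j + 1) (by omega)] at hb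
    exact hb
  · have hj2 : k + 2 ≤ j := by omega
    rw [partialSum_mu_ge l k c hc j hj2, partialSum_mu_ge l k c hc (j + 1) (by omega)] at hb
    exact hb

end rows

lemma mem_of_image_eq {r : ℕ} {σ : Equiv.Perm (Fin r)} {p : Fin r → Prop} [DecidablePred p]
    {Q : Finset (Fin r)}
    (h : (Finset.univ.filter p).image (fun b => σ⁻¹ b) = Q) : ∀ z, z ∈ Q ↔ p (σ z) := by
  intro z
  rw [← h]
  have : (fun b => σ⁻¹ b) = ⇑σ⁻¹ := rfl
  rw [this, mem_image_perm]
  simp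

lemma mem_rowsKK1_iff {r : ℕ} {l : ℕ → ℕ} {k : ℕ} {t : Equiv.Perm (Fin r)} (z : Fin r) :
    z ∈ rowsKK1 l k t ↔ (rowIndex l (t⁻¹ z) = k ∨ rowIndex l (t⁻¹ z) = k + 1) := by
  rw [rowsKK1, mem_image_perm]

/-- uniqueness of the row-standard tableau with given rows -/
lemma tabx_unique {r : ℕ} {l : ℕ → ℕ} (hl : IsCompositionOf l r) {k : ℕ}
    {t : Equiv.Perm (Fin r)} {Y : Finset (Fin r)} {d d' : Equiv.Perm (Fin r)}
    (h : IsTabX l l k t Y d) (h' : IsTabX l l k t Y d') : d = d' := by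
  classical
  have key : ∀ b : Fin r, d⁻¹ b = d'⁻¹ b := by
    intro b
    by_cases hk : rowIndex l b = k
    · have := eqOn_of_strictMonoOn_image_eq (⇑d⁻¹) (⇑d'⁻¹)
        (Finset.univ.filter (fun b => rowIndex l b = k)).card
        (Finset.univ.filter (fun b => rowIndex l b = k)) rfl
        (fun x hx y hy hxy => h.1 x y (by
          simp only [Finset.mem_filter] at hx hy; rw [hx.2, hy.2]) hxy)
        (fun x hx y hy hxy => h'.1 x y (by
          simp only [Finset.mem_filter] at hx hy; rw [hx.2, hy.2]) hxy)
        (by rw [show Finset.image (⇑d⁻¹) _ = _ from h.2.2.2,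
            show Finset.image (⇑d'⁻¹) _ = _ from h'.2.2.2])
      exact this b (by simp [hk])
    · by_cases hk1 : rowIndex l b = k + 1
      · have := eqOn_of_strictMonoOn_image_eq (⇑d⁻¹) (⇑d'⁻¹)
          (Finset.univ.filter (fun b => rowIndex l b = k + 1)).card
          (Finset.univ.filter (fun b => rowIndex l b = k + 1)) rfl
          (fun x hx y hy hxy => h.1 x y (by
            simp only [Finset.mem_filter] at hx hy; rw [hx.2, hy.2]) hxy)
          (fun x hx y hy hxy => h'.1 x y (by
            simp only [Finset.mem_filter] at hx hy; rw [hx.2, hy.2]) hxy)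
          (by rw [show Finset.image (⇑d⁻¹) _ = _ from h.2.2.1,
              show Finset.image (⇑d'⁻¹) _ = _ from h'.2.2.1])
        exact this b (by simp [hk1])
      · rw [h.2.1 b hk hk1, h'.2.1 b hk hk1]
  have hinv : d⁻¹ = d'⁻¹ := Equiv.ext key
  have := congrArg (fun (σ : Equiv.Perm (Fin r)) => σ⁻¹) hinv
  simpa using this

lemma forward_lemma {r : ℕ} {l : ℕ → ℕ} (hl : IsCompositionOf l r) {k : ℕ}
    {t : Equiv.Perm (Fin r)} {X : Finset (Fin r)} (hXZ : X ⊆ rowsKK1 l k t)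
    (hXcard : X.card ≤ l (k + 1)) {dX : Equiv.Perm (Fin r)}
    (hdX : IsTabX l (muComp l k X.card) k t X dX)
    {Y : Finset (Fin r)} (hXY : X ⊆ Y) (hYZ : Y ⊆ rowsKK1 l k t)
    {d : Equiv.Perm (Fin r)} (hdY : IsTabX l l k t Y d) :
    d ∈ minimalCosetReps l ∧
      (WXset (muComp l k X.card) (nuComp l k X.card) l dX d).Nonempty := by
  classical
  set c := X.card with hcdef
  set Z := rowsKK1 l k t with hZdef
  set μ := muComp l k c with hμdef
  set ν := nuComp l k c with hνdef
  have hbl : Bdd l r := bdd_of_comp hl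
  have hbμ : Bdd μ r := bdd_mu l k c hl hXcard
  have hbν : Bdd ν r := bdd_nu l k c hl hXcard
  have hP2 : partialSum l (k + 2) = partialSum l (k + 1) + l (k + 1) := by
    rw [show k + 2 = k + 1 + 1 from rfl]; exact partialSum_succ l (k + 1)
  have hP1 : partialSum l (k + 1) = partialSum l k + l k := partialSum_succ l k
  have hPr : ∀ e, partialSum l e ≤ r := fun e => partialSum_le_total hl e
  have hS11 : partialSum l (k + 1 + 1) = partialSum l (k + 2) := by norm_num
  -- membership characterizations
  have hmemX : ∀ z, z ∈ X ↔ rowIndex μ (dX z) = k + 1 := mem_of_image_eq hdX.2.2.1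
  have hmemZX : ∀ z, z ∈ Z \ X ↔ rowIndex μ (dX z) = k := mem_of_image_eq hdX.2.2.2
  have hmemY : ∀ z, z ∈ Y ↔ rowIndex l (d z) = k + 1 := mem_of_image_eq hdY.2.2.1
  have hmemZY : ∀ z, z ∈ Z \ Y ↔ rowIndex l (d z) = k := mem_of_image_eq hdY.2.2.2
  -- outside entries
  have houtX : ∀ z, z ∉ Z → dX z = t⁻¹ z ∧ rowIndex μ (dX z) ≠ k ∧
      rowIndex μ (dX z) ≠ k + 1 := by
    intro z hz
    have h1 : rowIndex μ (dX z) ≠ k + 1 := fun h => hz (hXZ ((hmemX z).2 h))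
    have h2 : rowIndex μ (dX z) ≠ k := fun h =>
      hz (Finset.mem_sdiff.1 ((hmemZX z).2 h)).1
    have := hdX.2.1 (dX z) h2 h1
    simp only [Equiv.Perm.coe_inv, Equiv.symm_apply_apply] at this
    exact ⟨((Equiv.symm_apply_eq t).2 this).symm, h2, h1⟩
  have houtY : ∀ z, z ∉ Z → d z = t⁻¹ z ∧ rowIndex l (d z) ≠ k ∧
      rowIndex l (d z) ≠ k + 1 := by
    intro z hz
    have h1 : rowIndex l (d z) ≠ k + 1 := fun h => hz (hYZ ((hmemY z).2 h))
    have h2 : rowIndex l (d z) ≠ k := fun h =>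
      hz (Finset.mem_sdiff.1 ((hmemZY z).2 h)).1
    have := hdY.2.1 (d z) h2 h1
    simp only [Equiv.Perm.coe_inv, Equiv.symm_apply_apply] at this
    exact ⟨((Equiv.symm_apply_eq t).2 this).symm, h2, h1⟩
  -- the sets B and S
  set Bset : Finset (Fin r) := Finset.univ.filter (fun b => rowIndex l b = k + 1) with hBdef
  set S : Finset (Fin r) := Finset.univ.filter
    (fun b => rowIndex l b = k + 1 ∧ d⁻¹ b ∈ X) with hSdef
  have hSsub : S ⊆ Bset := fun b hb => by
    simp only [hSdef, hBdef, Finset.mem_filter] at hb ⊢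
    exact ⟨hb.1, hb.2.1⟩
  have hSimage : S.image ⇑d⁻¹ = X := by
    ext z
    rw [hSdef, mem_image_perm]
    simp only [inv_inv]
    constructor
    · rintro ⟨_, hz⟩
      simpa using hz
    · intro hz
      refine ⟨(hmemY z).1 (hXY hz), by simpa using hz⟩
  have hScard : S.card = c := by
    rw [hcdef, ← hSimage, Finset.card_image_of_injective S (Equiv.injective _)]
  have hBcard : Bset.card = l (k + 1) := by
    have : Bset = Finset.univ.filter
        (fun b : Fin r => partialSum l (k + 1) ≤ (b : ℕ) ∧ (b : ℕ) < partialSum l (k + 1 + 1)) := by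
      apply Finset.filter_congr
      intro b _
      exact lrow_iff hl b (k + 1)
    rw [this, card_val_interval r _ _ (hPr (k + 1 + 1))]
    omega
  have hBScard : (Bset \ S).card = l (k + 1) - c := by
    rw [Finset.card_sdiff_of_subset hSsub, hBcard, hScard]
  have hcP : c ≤ l (k + 1) := hXcard
  -- the new permutation e
  set eval : Fin r → ℕ := fun b =>
    if b ∈ S then partialSum l (k + 2) - c + (S.filter (· < b)).card
    else if rowIndex l b = k + 1 then partialSum l (k + 1) + ((Bset \ S).filter (· < b)).card
    else (b : ℕ) with hevaldef
  have hev1 : ∀ b ∈ S, partialSum l (k + 2) - c ≤ eval b ∧ eval b < partialSum l (k + 2) := by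
    intro b hb
    rw [hevaldef]
    simp only [if_pos hb]
    have := countBelow_lt hb
    omega
  have hev2 : ∀ b, b ∉ S → rowIndex l b = k + 1 →
      partialSum l (k + 1) ≤ eval b ∧ eval b < partialSum l (k + 2) - c := by
    intro b hb hrow
    rw [hevaldef]
    simp only [if_neg hb, if_pos hrow]
    have hmem : b ∈ Bset \ S := Finset.mem_sdiff.2 ⟨by simp [hBdef, hrow], hb⟩
    have := countBelow_lt hmem
    omega
  have hev3 : ∀ b : Fin r, rowIndex l b ≠ k + 1 → eval b = (b : ℕ) := by
    intro b hrow
    rw [hevaldef]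
    have hbS : b ∉ S := fun h => hrow (by simp only [hSdef, Finset.mem_filter] at h; exact h.2.1)
    simp only [if_neg hbS, if_neg hrow]
  have hout_val : ∀ b : Fin r, rowIndex l b ≠ k + 1 →
      ¬(partialSum l (k + 1) ≤ (b : ℕ) ∧ (b : ℕ) < partialSum l (k + 2)) := by
    intro b hrow hint
    exact hrow ((lrow_iff hl b (k + 1)).2 hint)
  have heval_lt : ∀ b, eval b < r := by
    intro b
    by_cases h1 : b ∈ S
    · have := hev1 b h1
      have := hPr (k + 2)
      omega
    · by_cases h2 : rowIndex l b = k + 1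
      · have := hev2 b h1 h2
        have := hPr (k + 2)
        omega
      · rw [hev3 b h2]; exact b.isLt
  set efun : Fin r → Fin r := fun b => ⟨eval b, heval_lt b⟩ with hefundef
  -- strict monotonicity on the two regions
  have hmono1 : ∀ b₁ ∈ S, ∀ b₂ ∈ S, b₁ < b₂ → eval b₁ < eval b₂ := by
    intro b₁ h₁ b₂ h₂ hlt
    rw [hevaldef]
    simp only [if_pos h₁, if_pos h₂]
    have := countBelow_strictMono h₁ hlt
    omega
  have hmono2 : ∀ b₁ b₂, b₁ ∈ Bset \ S → b₂ ∈ Bset \ S → b₁ < b₂ → eval b₁ < eval b₂ := by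
    intro b₁ b₂ h₁ h₂ hlt
    obtain ⟨hB₁, hS₁⟩ := Finset.mem_sdiff.1 h₁
    obtain ⟨hB₂, hS₂⟩ := Finset.mem_sdiff.1 h₂
    have hrow₁ : rowIndex l b₁ = k + 1 := by simpa [hBdef] using hB₁
    have hrow₂ : rowIndex l b₂ = k + 1 := by simpa [hBdef] using hB₂
    rw [hevaldef]
    simp only [if_neg hS₁, if_neg hS₂, if_pos hrow₁, if_pos hrow₂]
    have := countBelow_strictMono h₁ hlt
    omega
  have hne_lt : ∀ b₁ b₂ : Fin r, b₁ < b₂ → eval b₁ ≠ eval b₂ := by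
    intro b₁ b₂ hlt
    by_cases h₁ : b₁ ∈ S <;> by_cases h₂ : b₂ ∈ S
    · exact ne_of_lt (hmono1 b₁ h₁ b₂ h₂ hlt)
    · have e1 := hev1 b₁ h₁
      by_cases hr₂ : rowIndex l b₂ = k + 1
      · have e2 := hev2 b₂ h₂ hr₂
        omega
      · have e2 := hev3 b₂ hr₂
        have := hout_val b₂ hr₂
        omega
    · have e2 := hev1 b₂ h₂
      by_cases hr₁ : rowIndex l b₁ = k + 1
      · have e1 := hev2 b₁ h₁ hr₁
        omega
      · have e1 := hev3 b₁ hr₁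
        have := hout_val b₁ hr₁
        omega
    · by_cases hr₁ : rowIndex l b₁ = k + 1 <;> by_cases hr₂ : rowIndex l b₂ = k + 1
      · have hm₁ : b₁ ∈ Bset \ S := Finset.mem_sdiff.2 ⟨by simp [hBdef, hr₁], h₁⟩
        have hm₂ : b₂ ∈ Bset \ S := Finset.mem_sdiff.2 ⟨by simp [hBdef, hr₂], h₂⟩
        exact ne_of_lt (hmono2 b₁ b₂ hm₁ hm₂ hlt)
      · have e1 := hev2 b₁ h₁ hr₁
        have e2 := hev3 b₂ hr₂
        have := hout_val b₂ hr₂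
        omega
      · have e1 := hev3 b₁ hr₁
        have e2 := hev2 b₂ h₂ hr₂
        have := hout_val b₁ hr₁
        omega
      · have e1 := hev3 b₁ hr₁
        have e2 := hev3 b₂ hr₂
        have hlt' : (b₁ : ℕ) < (b₂ : ℕ) := hlt
        omega
  have hinj : Function.Injective efun := by
    intro b₁ b₂ heq
    have hval : eval b₁ = eval b₂ := congrArg Fin.val heq
    rcases lt_trichotomy b₁ b₂ with h | h | h
    · exact absurd hval (hne_lt b₁ b₂ h)
    · exact h
    · exact absurd hval.symm (hne_lt b₂ b₁ h)
  set e : Equiv.Perm (Fin r) := Equiv.ofBijective efun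
    (Finite.injective_iff_bijective.1 hinj) with hedef
  have heapp : ∀ b, (e b : ℕ) = eval b := fun b => rfl
  -- e is in the Young subgroup of l
  have heY : e ∈ YoungSubgroup (r := r) l := by
    intro b
    by_cases h₁ : b ∈ S
    · have hrow : rowIndex l b = k + 1 := by
        simp only [hSdef, Finset.mem_filter] at h₁; exact h₁.2.1
      have := hev1 b h₁
      rw [hrow]
      apply (lrow_iff hl (e b) (k + 1)).2
      rw [heapp]
      constructor <;> omega
    · by_cases h₂ : rowIndex l b = k + 1
      · have := hev2 b h₁ h₂
        rw [h₂]
        apply (lrow_iff hl (e b) (k + 1)).2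
        rw [heapp]
        constructor <;> omega
      · have : e b = b := Fin.ext (by rw [heapp, hev3 b h₂])
        rw [this]
  -- e is row standard for ν
  have heν : IsRowStandard ν e⁻¹ := by
    intro b₁ b₂ hrow hlt
    set a₁ := e⁻¹ b₁ with ha₁
    set a₂ := e⁻¹ b₂ with ha₂
    have he₁ : e a₁ = b₁ := Equiv.apply_symm_apply e b₁
    have he₂ : e a₂ = b₂ := Equiv.apply_symm_apply e b₂
    have haux : ∀ (a b : Fin r), e a = b →
        ((partialSum l (k + 1) ≤ (b : ℕ) ∧ (b : ℕ) < partialSum l (k + 2) - c) → a ∈ Bset \ S) ∧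
        ((partialSum l (k + 2) - c ≤ (b : ℕ) ∧ (b : ℕ) < partialSum l (k + 2)) → a ∈ S) ∧
        (¬(partialSum l (k + 1) ≤ (b : ℕ) ∧ (b : ℕ) < partialSum l (k + 2)) → a = b) := by
      intro a b hab
      have hval : eval a = (b : ℕ) := by rw [← hab, ← heapp]
      by_cases h₁ : a ∈ S
      · have hbd := hev1 a h₁
        refine ⟨fun h => absurd hval (by omega), fun _ => h₁,
          fun h => absurd ⟨by omega, by omega⟩ h⟩
      · by_cases h₂ : rowIndex l a = k + 1
        · have hbd := hev2 a h₁ h₂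
          refine ⟨fun _ => Finset.mem_sdiff.2 ⟨by simp [hBdef, h₂], h₁⟩,
            fun h => absurd hval (by omega), fun h => absurd ⟨by omega, by omega⟩ h⟩
        · have h3 := hev3 a h₂
          have h4 := hout_val a h₂
          exact ⟨fun h => absurd h (by omega), fun h => absurd h (by omega),
            fun _ => Fin.ext (by omega)⟩
    by_cases hj1 : rowIndex ν b₁ = k + 1
    · have hb₁ := (nurow_k1_iff hl hXcard b₁).1 hj1
      have hb₂ := (nurow_k1_iff hl hXcard b₂).1 (by rw [← hrow]; exact hj1)
      have hm₁ := ((haux a₁ b₁ he₁).1) hb₁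
      have hm₂ := ((haux a₂ b₂ he₂).1) hb₂
      by_contra hc
      push_neg at hc
      rcases eq_or_lt_of_le hc with h | h
      · rw [← he₁, ← he₂, h] at hlt
        exact lt_irrefl _ hlt
      · have := hmono2 a₂ a₁ hm₂ hm₁ h
        rw [← heapp, ← heapp, he₁, he₂] at this
        exact absurd (lt_trans hlt this) (lt_irrefl _)
    · by_cases hj2 : rowIndex ν b₁ = k + 2
      · have hb₁ := (nurow_k2_iff hl hXcard b₁).1 hj2
        have hb₂ := (nurow_k2_iff hl hXcard b₂).1 (by rw [← hrow]; exact hj2)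
        have hm₁ := ((haux a₁ b₁ he₁).2.1) hb₁
        have hm₂ := ((haux a₂ b₂ he₂).2.1) hb₂
        by_contra hc
        push_neg at hc
        rcases eq_or_lt_of_le hc with h | h
        · rw [← he₁, ← he₂, h] at hlt
          exact lt_irrefl _ hlt
        · have := hmono1 a₂ hm₂ a₁ hm₁ h
          rw [← heapp, ← heapp, he₁, he₂] at this
          exact absurd (lt_trans hlt this) (lt_irrefl _)
      · have hb₁ : ¬(partialSum l (k + 1) ≤ (b₁ : ℕ) ∧ (b₁ : ℕ) < partialSum l (k + 2)) := by
          intro hint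
          rcases Nat.lt_or_ge (b₁ : ℕ) (partialSum l (k + 2) - c) with h | h
          · exact hj1 ((nurow_k1_iff hl hXcard b₁).2 ⟨hint.1, h⟩)
          · exact hj2 ((nurow_k2_iff hl hXcard b₁).2 ⟨h, hint.2⟩)
        have hb₂ : ¬(partialSum l (k + 1) ≤ (b₂ : ℕ) ∧ (b₂ : ℕ) < partialSum l (k + 2)) := by
          intro hint
          rcases Nat.lt_or_ge (b₂ : ℕ) (partialSum l (k + 2) - c) with h | h
          · exact hj1 (by rw [hrow]; exact (nurow_k1_iff hl hXcard b₂).2 ⟨hint.1, h⟩)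
          · exact hj2 (by rw [hrow]; exact (nurow_k2_iff hl hXcard b₂).2 ⟨h, hint.2⟩)
        have hm₁ := ((haux a₁ b₁ he₁).2.2) hb₁
        have hm₂ := ((haux a₂ b₂ he₂).2.2) hb₂
        rw [hm₁, hm₂]
        exact hlt
  have heD : e ∈ minimalCosetReps (r := r) ν :=
    mem_minimalCosetReps_of_rowStandard hbν heν
  -- w ∈ Young μ
  have hwμ : e * d * dX⁻¹ ∈ YoungSubgroup (r := r) μ := by
    intro b
    have hbz : dX (dX⁻¹ b) = b := Equiv.apply_symm_apply dX b
    set z := dX⁻¹ b with hzdef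
    show rowIndex μ (e (d z)) = rowIndex μ b
    rw [← hbz]
    by_cases hzX : z ∈ X
    · have hrhs : rowIndex μ (dX z) = k + 1 := (hmemX z).1 hzX
      have hdz : rowIndex l (d z) = k + 1 := (hmemY z).1 (hXY hzX)
      have hdzS : d z ∈ S := by
        simp only [hSdef, Finset.mem_filter]
        exact ⟨Finset.mem_univ _, hdz, by simpa using hzX⟩
      have := hev1 (d z) hdzS
      rw [hrhs]
      apply (murow_k1_iff hl hXcard (e (d z))).2
      rw [heapp]
      exact this
    · by_cases hzZ : z ∈ Z
      · have hrhs : rowIndex μ (dX z) = k := (hmemZX z).1 (Finset.mem_sdiff.2 ⟨hzZ, hzX⟩)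
        rw [hrhs]
        by_cases hzY : z ∈ Y
        · have hdz : rowIndex l (d z) = k + 1 := (hmemY z).1 hzY
          have hdzS : d z ∉ S := by
            simp only [hSdef, Finset.mem_filter]
            push_neg
            intro _ _
            simpa using hzX
          have := hev2 (d z) hdzS hdz
          apply (murow_k_iff hl hXcard (e (d z))).2
          rw [heapp]
          have hPk : partialSum l k ≤ partialSum l (k + 1) := partialSum_mono l (by omega)
          constructor <;> omega
        · have hdz : rowIndex l (d z) = k := (hmemZY z).1 (Finset.mem_sdiff.2 ⟨hzZ, hzY⟩)
          have hee : e (d z) = d z := Fin.ext (by rw [heapp, hev3 (d z) (by omega)])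
          rw [hee]
          have hint := (lrow_iff hl (d z) k).1 hdz
          apply (murow_k_iff hl hXcard (d z)).2
          have hP12 : partialSum l (k + 1) ≤ partialSum l (k + 2) - c := by omega
          exact ⟨hint.1, by omega⟩
      · obtain ⟨hdXz, hμ1, hμ2⟩ := houtX z hzZ
        obtain ⟨hdz, hl1, hl2⟩ := houtY z hzZ
        have hee : e (d z) = d z := Fin.ext (by rw [heapp, hev3 (d z) hl2])
        rw [hee, hdz, hdXz]
  refine ⟨mem_minimalCosetReps_of_rowStandard hbl hdY.1, ⟨e * d * dX⁻¹, hwμ, e, heD, heY, rfl⟩⟩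

lemma reverse_lemma {r : ℕ} {l : ℕ → ℕ} (hl : IsCompositionOf l r) {k : ℕ}
    {t : Equiv.Perm (Fin r)} (ht : IsRowStandard l t)
    {X : Finset (Fin r)} (hXZ : X ⊆ rowsKK1 l k t) (hXcard : X.card ≤ l (k + 1))
    {dX : Equiv.Perm (Fin r)} (hdX : IsTabX l (muComp l k X.card) k t X dX)
    {d : Equiv.Perm (Fin r)} (hmin : d ∈ minimalCosetReps l)
    (hW : (WXset (muComp l k X.card) (nuComp l k X.card) l dX d).Nonempty) :
    ∃ Y : Finset (Fin r), (X ⊆ Y ∧ Y ⊆ rowsKK1 l k t ∧ Y.card = l (k + 1)) ∧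
      IsTabX l l k t Y d := by
  classical
  set c := X.card with hcdef
  set Z := rowsKK1 l k t with hZdef
  set μ := muComp l k c with hμdef
  have hbl : Bdd l r := bdd_of_comp hl
  have hP2 : partialSum l (k + 2) = partialSum l (k + 1) + l (k + 1) := by
    rw [show k + 2 = k + 1 + 1 from rfl]; exact partialSum_succ l (k + 1)
  have hP1 : partialSum l (k + 1) = partialSum l k + l k := partialSum_succ l k
  have hPr : ∀ e, partialSum l e ≤ r := fun e => partialSum_le_total hl e
  have hS11 : partialSum l (k + 1 + 1) = partialSum l (k + 2) := by norm_num
  have hmemX : ∀ z, z ∈ X ↔ rowIndex μ (dX z) = k + 1 := mem_of_image_eq hdX.2.2.1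
  have hmemZX : ∀ z, z ∈ Z \ X ↔ rowIndex μ (dX z) = k := mem_of_image_eq hdX.2.2.2
  have houtX : ∀ z, z ∉ Z → dX z = t⁻¹ z ∧ rowIndex μ (dX z) ≠ k ∧
      rowIndex μ (dX z) ≠ k + 1 := by
    intro z hz
    have h1 : rowIndex μ (dX z) ≠ k + 1 := fun h => hz (hXZ ((hmemX z).2 h))
    have h2 : rowIndex μ (dX z) ≠ k := fun h =>
      hz (Finset.mem_sdiff.1 ((hmemZX z).2 h)).1
    have := hdX.2.1 (dX z) h2 h1
    simp only [Equiv.Perm.coe_inv, Equiv.symm_apply_apply] at this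
    exact ⟨((Equiv.symm_apply_eq t).2 this).symm, h2, h1⟩
  obtain ⟨w, hwμ, e, heD, heY, hw⟩ := hW
  have hdeq : ∀ z, d z = e⁻¹ (w (dX z)) := by
    intro z
    have : d = e⁻¹ * w * dX := by rw [hw]; group
    rw [this]
    rfl
  have heY' : ∀ b, rowIndex l (e⁻¹ b) = rowIndex l b := by
    intro b
    conv_rhs => rw [← Equiv.apply_symm_apply e b]
    exact (heY (e⁻¹ b)).symm
  have claimX : ∀ z ∈ X, rowIndex l (d z) = k + 1 := by
    intro z hz
    have h1 : rowIndex μ (dX z) = k + 1 := (hmemX z).1 hz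
    have h2 : rowIndex μ (w (dX z)) = k + 1 := by rw [hwμ (dX z), h1]
    have h3 := (murow_k1_iff hl hXcard (w (dX z))).1 h2
    have h4 : rowIndex l (w (dX z)) = k + 1 := by
      apply (lrow_iff hl (w (dX z)) (k + 1)).2
      constructor <;> omega
    rw [hdeq z, heY', h4]
  have claimZX : ∀ z, z ∈ Z \ X →
      rowIndex l (d z) = k ∨ rowIndex l (d z) = k + 1 := by
    intro z hz
    have h1 : rowIndex μ (dX z) = k := (hmemZX z).1 hz
    have h2 : rowIndex μ (w (dX z)) = k := by rw [hwμ (dX z), h1]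
    have h3 := (murow_k_iff hl hXcard (w (dX z))).1 h2
    rw [hdeq z, heY']
    rcases Nat.lt_or_ge ((w (dX z)) : ℕ) (partialSum l (k + 1)) with h | h
    · left
      apply (lrow_iff hl (w (dX z)) k).2
      exact ⟨h3.1, h⟩
    · right
      apply (lrow_iff hl (w (dX z)) (k + 1)).2
      constructor <;> omega
  have claimOut : ∀ z, z ∉ Z → rowIndex l (d z) = rowIndex l (t⁻¹ z) ∧
      rowIndex l (t⁻¹ z) ≠ k ∧ rowIndex l (t⁻¹ z) ≠ k + 1 := by
    intro z hz
    obtain ⟨hdXz, hμ1, hμ2⟩ := houtX z hz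
    have h1 : rowIndex l (dX z) = rowIndex μ (dX z) :=
      lrow_eq_murow_of_ne hl hXcard (dX z) hμ1 hμ2
    have h2 : rowIndex μ (w (dX z)) = rowIndex μ (dX z) := hwμ (dX z)
    have h3 : rowIndex l (w (dX z)) = rowIndex μ (w (dX z)) :=
      lrow_eq_murow_of_ne hl hXcard (w (dX z)) (by rw [h2]; exact hμ1) (by rw [h2]; exact hμ2)
    have h4 : rowIndex l (t⁻¹ z) = rowIndex μ (dX z) := by rw [← hdXz, h1]
    rw [hdeq z, heY', h3, h2, h4]
    omega
  set Y : Finset (Fin r) :=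
    (Finset.univ.filter (fun b => rowIndex l b = k + 1)).image (fun b => d⁻¹ b) with hYdef
  have hmemY : ∀ z, z ∈ Y ↔ rowIndex l (d z) = k + 1 := mem_of_image_eq hYdef.symm
  have hXY : X ⊆ Y := fun z hz => (hmemY z).2 (claimX z hz)
  have hYZ : Y ⊆ Z := by
    intro z hz
    by_contra hzZ
    exact (claimOut z hzZ).2.2 (by rw [← (claimOut z hzZ).1]; exact (hmemY z).1 hz)
  have hYcard : Y.card = l (k + 1) := by
    rw [hYdef]
    have h1 : (Finset.univ.filter (fun b : Fin r => rowIndex l b = k + 1)).image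
        (fun b => d⁻¹ b) = (Finset.univ.filter (fun b : Fin r => rowIndex l b = k + 1)).image
        ⇑d⁻¹ := rfl
    rw [h1, Finset.card_image_of_injective _ (Equiv.injective _)]
    have h2 : (Finset.univ.filter (fun b : Fin r => rowIndex l b = k + 1)) =
        Finset.univ.filter
        (fun b : Fin r => partialSum l (k + 1) ≤ (b : ℕ) ∧ (b : ℕ) < partialSum l (k + 1 + 1)) := by
      apply Finset.filter_congr
      intro b _
      exact lrow_iff hl b (k + 1)
    rw [h2, card_val_interval r _ _ (hPr (k + 1 + 1))]
    omega
  have hstd : IsRowStandard l d⁻¹ := rowStandard_of_mem_minimalCosetReps hbl hmin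
  have houts : ∀ b : Fin r, rowIndex l b ≠ k → rowIndex l b ≠ k + 1 → d⁻¹ b = t b := by
    intro b hk hk1
    set j := rowIndex l b with hjdef
    set s := Finset.univ.filter (fun b : Fin r => rowIndex l b = j) with hsdef
    have hsub : s.image ⇑d⁻¹ ⊆ s.image ⇑t := by
      intro z hz
      rw [hsdef, mem_image_perm] at hz
      simp only [inv_inv] at hz
      have hzZ : z ∉ Z := by
        intro hzZ
        by_cases hzX : z ∈ X
        · exact hk1 (by rw [← hz]; exact (claimX z hzX).symm ▸ (claimX z hzX) ▸ rfl)
        · rcases claimZX z (Finset.mem_sdiff.2 ⟨hzZ, hzX⟩) with h | h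
          · exact hk (by rw [← hz, h])
          · exact hk1 (by rw [← hz, h])
      obtain ⟨h1, _, _⟩ := claimOut z hzZ
      rw [hsdef, mem_image_perm]
      rw [← h1, hz]
    have hcards : (s.image ⇑t).card ≤ (s.image ⇑d⁻¹).card := by
      rw [Finset.card_image_of_injective _ (Equiv.injective _),
        Finset.card_image_of_injective _ (Equiv.injective _)]
    have him : s.image ⇑d⁻¹ = s.image ⇑t := Finset.eq_of_subset_of_card_le hsub hcards
    have := eqOn_of_strictMonoOn_image_eq (⇑d⁻¹) (⇑t) s.card s rfl
      (fun x hx y hy hxy => hstd x y (by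
        rw [hsdef] at hx hy
        simp only [Finset.mem_filter] at hx hy
        rw [hx.2, hy.2]) hxy)
      (fun x hx y hy hxy => ht x y (by
        rw [hsdef] at hx hy
        simp only [Finset.mem_filter] at hx hy
        rw [hx.2, hy.2]) hxy) him
    exact this b (by rw [hsdef]; simp [hjdef])
  have h4 : (Finset.univ.filter (fun b => rowIndex l b = k)).image (fun b => d⁻¹ b)
      = Z \ Y := by
    ext z
    have hmz : z ∈ (Finset.univ.filter (fun b : Fin r => rowIndex l b = k)).image
        (fun b => d⁻¹ b) ↔ rowIndex l (d z) = k := mem_of_image_eq rfl z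
    rw [hmz, Finset.mem_sdiff]
    constructor
    · intro h
      have hzZ : z ∈ Z := by
        by_contra hzZ
        exact (claimOut z hzZ).2.1 (by rw [← (claimOut z hzZ).1, h])
      refine ⟨hzZ, fun hzY => ?_⟩
      have := (hmemY z).1 hzY
      omega
    · rintro ⟨hzZ, hzY⟩
      by_cases hzX : z ∈ X
      · exact absurd ((hmemY z).2 (claimX z hzX)) hzY
      · rcases claimZX z (Finset.mem_sdiff.2 ⟨hzZ, hzX⟩) with h | h
        · exact h
        · exact absurd ((hmemY z).2 h) hzY
  exact ⟨Y, ⟨hXY, hYZ, hYcard⟩, hstd, houts, hYdef.symm, h4⟩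

theorem statement17 (r : ℕ) (l : ℕ → ℕ) (hl : IsCompositionOf l r) (k : ℕ)
    (t : Equiv.Perm (Fin r)) (ht : IsRowStandard l t)
    (X : Finset (Fin r)) (hXZ : X ⊆ rowsKK1 l k t) (hXcard : X.card ≤ l (k + 1))
    (dX : Equiv.Perm (Fin r)) (hdX : IsTabX l (muComp l k X.card) k t X dX)
    (dY : Finset (Fin r) → Equiv.Perm (Fin r))
    (hdY : ∀ Y : Finset (Fin r), X ⊆ Y → Y ⊆ rowsKK1 l k t → Y.card = l (k + 1) →
      IsTabX l l k t Y (dY Y)) :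
    Set.InjOn dY {Y : Finset (Fin r) | X ⊆ Y ∧ Y ⊆ rowsKK1 l k t ∧ Y.card = l (k + 1)} ∧
    dY '' {Y : Finset (Fin r) | X ⊆ Y ∧ Y ⊆ rowsKK1 l k t ∧ Y.card = l (k + 1)}
      = {d : Equiv.Perm (Fin r) | d ∈ minimalCosetReps (r := r) l ∧
          (WXset (muComp l k X.card) (nuComp l k X.card) l dX d).Nonempty} := by
  classical
  constructor
  · intro Y₁ h₁ Y₂ h₂ heq
    have e₁ := (hdY Y₁ h₁.1 h₁.2.1 h₁.2.2).2.2.1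
    have e₂ := (hdY Y₂ h₂.1 h₂.2.1 h₂.2.2).2.2.1
    rw [← e₁, ← e₂, heq]
  · ext d
    simp only [Set.mem_image, Set.mem_setOf_eq]
    constructor
    · rintro ⟨Y, ⟨hXY, hYZ, hYcard⟩, rfl⟩
      exact forward_lemma hl hXZ hXcard hdX hXY hYZ (hdY Y hXY hYZ hYcard)
    · rintro ⟨hmin, hW⟩
      obtain ⟨Y, ⟨hXY, hYZ, hYcard⟩, htab⟩ := reverse_lemma hl ht hXZ hXcard hdX hmin hW
      exact ⟨Y, ⟨hXY, hYZ, hYcard⟩, tabx_unique hl (hdY Y hXY hYZ hYcard) htab⟩
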